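/- arXiv:0812.2668 — 7 statements merged into one kernel-verified Lean document; each statement's English description precedes it below -/
import Mathlib

section
/- Let V_1, ..., V_{n²} be matrices in M_n(ℂ). Then the following are equivalent: (1) Tr(V_i* V_j) = δ_{ij} for all 1 ≤ i, j ≤ n²; (2) for every A ∈ M_n(ℂ), the sum over i of V_i* A V_i equals (Tr A)·I. -/
/-!
Stack the vectorisations of the `V i` as the columns of a square `n² × n²` matrix `T`.
Condition (1) says `Tᴴ * T = 1`. Evaluated on the matrix units `single x y 1`, condition (2)
says `T * Tᴴ = 1`, and by linearity the matrix units suffice. For square matrices over a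
commutative ring a one-sided inverse is two-sided.
-/

open Matrix

namespace Matrix

variable {ι m n R : Type*}

/-- Column `i` is `vec (V i)`; as `vec` indexes by (column, row), `vecCols V (k, j) i = V i j k`. -/
def vecCols (V : ι → Matrix m n R) : Matrix (n × m) ι R :=
  of fun p i => (V i).vec p

theorem trace_single_smul_one_apply [Fintype m] [DecidableEq m] [Semiring R] (x y a b : m) :
    ((single x y (1 : R)).trace • (1 : Matrix m m R)) a b =
      (1 : Matrix (m × m) (m × m) R) (b, y) (a, x) := by
  by_cases hxy : x = y
  · subst hxy
    simp [one_apply, eq_comm]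
  · simp [one_apply, hxy, Ne.symm hxy]

variable [Fintype m] [CommRing R] [StarRing R] (V : ι → Matrix m m R)

theorem conjTranspose_vecCols_mul_vecCols_apply (i j : ι) :
    ((vecCols V)ᴴ * vecCols V) i j = ((V i)ᴴ * V j).trace :=
  star_vec_dotProduct_vec (V i) (V j)

theorem conjTranspose_vecCols_mul_vecCols_eq_one_iff [DecidableEq ι] :
    (vecCols V)ᴴ * vecCols V = 1 ↔
      ∀ i j, ((V i)ᴴ * V j).trace = if i = j then (1 : R) else 0 := by
  simp only [← Matrix.ext_iff, conjTranspose_vecCols_mul_vecCols_apply, one_apply]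

variable [Fintype ι] [DecidableEq m]

theorem sum_conjTranspose_mul_single_mul_apply (x y a b : m) :
    (∑ i, (V i)ᴴ * single x y 1 * V i : Matrix m m R) a b =
      (vecCols V * (vecCols V)ᴴ) (b, y) (a, x) := by
  simp [Matrix.sum_apply, mul_apply, vecCols, vec, single_apply, ite_and, mul_comm]

theorem vecCols_mul_conjTranspose_vecCols_eq_one_iff :
    vecCols V * (vecCols V)ᴴ = 1 ↔
      ∀ A : Matrix m m R, ∑ i, (V i)ᴴ * A * V i = A.trace • 1 := by
  constructor
  · intro h A
    induction A using Matrix.induction_on' with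
    | h_zero => simp
    | h_add A B hA hB => simp [mul_add, add_mul, Finset.sum_add_distrib, hA, hB, add_smul]
    | h_std_basis x y c =>
      have hc : single x y c = c • single x y 1 := by rw [smul_single, smul_eq_mul, mul_one]
      simp only [hc, Matrix.mul_smul, Matrix.smul_mul, ← Finset.smul_sum, trace_smul, smul_assoc]
      congr 1
      ext a b
      rw [sum_conjTranspose_mul_single_mul_apply, h, trace_single_smul_one_apply]
  · intro h
    ext ⟨b, y⟩ ⟨a, x⟩
    rw [← sum_conjTranspose_mul_single_mul_apply, ← trace_single_smul_one_apply, h]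

end Matrix

/-- For n² matrices V_i in M_n(ℂ): they form an orthonormal system w.r.t. the
Hilbert–Schmidt inner product iff ∑_i V_i* A V_i = (Tr A)·I for every A. -/
theorem orthonormal_iff_sum_conj_eq_trace_smul_one (n : ℕ)
    (V : Fin (n ^ 2) → Matrix (Fin n) (Fin n) ℂ) :
    (∀ i j, ((V i)ᴴ * V j).trace = if i = j then (1 : ℂ) else 0) ↔
      (∀ A : Matrix (Fin n) (Fin n) ℂ,
        ∑ i, (V i)ᴴ * A * V i = A.trace • (1 : Matrix (Fin n) (Fin n) ℂ)) := by
  rw [← conjTranspose_vecCols_mul_vecCols_eq_one_iff,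
    ← vecCols_mul_conjTranspose_vecCols_eq_one_iff]
  exact mul_eq_one_comm_of_card_eq _ _ _ (by simp [sq])
end

section
/- If W ∈ M_n(ℂ) satisfies Tr(W W*) = 1, then the matrix P = Σ_{i,j} (W* E_{ij} W) ⊗ E_{ij} in M_n(ℂ) ⊗ M_n(ℂ) is a projection, i.e., P is self-adjoint and P² = P. -/
open Matrix BigOperators
open scoped Kronecker

/-!
Entrywise, `P (a, b) (c, d) = conj (W b a) * W d c`, so `P = v vᴴ` with `v = star (vec W)`.
Since `vᴴ v = Tr (W Wᴴ) = 1`, this rank-one matrix is the orthogonal projection onto `ℂ v`.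
-/

namespace Matrix

variable {l m n p R : Type*}

theorem isStarProjection_vecMulVec_star [Fintype n] [Semiring R] [StarMul R] {v : n → R}
    (hv : star v ⬝ᵥ v = 1) : IsStarProjection (vecMulVec v (star v)) where
  isIdempotentElem := by
    rw [IsIdempotentElem, vecMulVec_mul_vecMulVec, hv, one_smul]
  isSelfAdjoint := by
    rw [IsSelfAdjoint, star_eq_conjTranspose, conjTranspose_vecMulVec, star_star]

theorem sum_mul_single_mul_kronecker_single [Fintype m] [Fintype n] [DecidableEq m]
    [DecidableEq n] [Semiring R] (A : Matrix l m R) (B : Matrix n p R) :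
    ∑ i, ∑ j, (A * single i j (1 : R) * B) ⊗ₖ single i j (1 : R) =
      vecMulVec (vec Aᵀ) (vec B) := by
  ext ⟨a, i⟩ ⟨c, j⟩
  simp [sum_apply, mul_apply, single_apply, vec, vecMulVec_apply, ite_and, Finset.sum_ite_eq,
    Finset.sum_ite_eq']

end Matrix

/-- If Tr(W W*) = 1 then P = ∑_{i,j} (W* E_{ij} W) ⊗ E_{ij} is a projection. -/
theorem kron_sum_isProjection (n : ℕ) (W : Matrix (Fin n) (Fin n) ℂ)
    (hW : (W * Wᴴ).trace = 1)
    (P : Matrix (Fin n × Fin n) (Fin n × Fin n) ℂ)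
    (hP : P = ∑ i : Fin n, ∑ j : Fin n,
      (Wᴴ * Matrix.single i j (1 : ℂ) * W) ⊗ₖ Matrix.single i j (1 : ℂ)) :
    Pᴴ = P ∧ P * P = P := by
  set v := star (vec W)
  have hPv : P = vecMulVec v (star v) := by
    rw [hP, sum_mul_single_mul_kronecker_single, conjTranspose_transpose, ← star_vec, star_star]
  have hv : star v ⬝ᵥ v = 1 := by
    rw [star_star, dotProduct_comm, star_vec_dotProduct_vec, trace_mul_comm, hW]
  obtain ⟨hidem, hsa⟩ := hPv ▸ isStarProjection_vecMulVec_star hv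
  exact ⟨hsa, hidem⟩
end

section
/- Let {U_i : 1 ≤ i ≤ m} be an orthonormal system in M_n(ℂ) (i.e., Tr(U_i* U_j) = δ_{ij}) and μ_1, ..., μ_m real numbers. Then the linear map α : M_n(ℂ) → M_n(ℂ) defined by α(A) = Σ_i μ_i U_i* A U_i is completely positive if and only if μ_i ≥ 0 for every i. -/
open Matrix BigOperators
open scoped Kronecker ComplexOrder

/-- The Choi matrix of a map Φ : M_n(ℂ) → M_n(ℂ). -/
noncomputable def choiMatrix {n : ℕ}
    (Φ : Matrix (Fin n) (Fin n) ℂ → Matrix (Fin n) (Fin n) ℂ) :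
    Matrix (Fin n × Fin n) (Fin n × Fin n) ℂ :=
  ∑ i : Fin n, ∑ j : Fin n,
    Φ (Matrix.single i j (1 : ℂ)) ⊗ₖ Matrix.single i j (1 : ℂ)

/-- Complete positivity via Choi's theorem: Φ is completely positive iff its
Choi matrix is positive semidefinite. -/
noncomputable def IsCompletelyPositive {n : ℕ}
    (Φ : Matrix (Fin n) (Fin n) ℂ → Matrix (Fin n) (Fin n) ℂ) : Prop :=
  (choiMatrix Φ).PosSemidef

/-!
Let `V` be the matrix whose `k`-th column is the vectorization of the entrywise conjugate of
`U k`. The Choi matrix of `A ↦ ∑ μ_k U_k* A U_k` is `V diag(μ) V*`, and orthonormality of the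
`U k` in the Hilbert–Schmidt inner product says exactly `V* V = 1`. Conjugating by `V` therefore
recovers `diag(μ)`, so the Choi matrix is positive semidefinite iff `diag(μ)` is, i.e. iff all
`μ i ≥ 0`.
-/

section

variable {ι κ m n R : Type*}

lemma conjTranspose_mul_single_mul_apply [Fintype ι] [DecidableEq ι] [Semiring R] [StarRing R]
    (M : Matrix ι κ R) (i j : ι) (a c : κ) :
    (Mᴴ * single i j (1 : R) * M) a c = star (M i a) * M j c := by
  simp [Matrix.mul_apply, single_apply, ite_and]

lemma trace_conjTranspose_map_star_mul_map_star [Fintype m] [Fintype n] [CommSemiring R]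
    [StarRing R] (A B : Matrix m n R) :
    ((A.map star)ᴴ * B.map star).trace = (Bᴴ * A).trace := by
  simp [trace, mul_apply, mul_comm]

lemma posSemidef_mul_diagonal_mul_conjTranspose_iff [Fintype ι] [DecidableEq ι] [Fintype κ]
    [Ring R] [PartialOrder R] [StarRing R] [StarOrderedRing R]
    {V : Matrix κ ι R} (hV : Vᴴ * V = 1) (d : ι → R) :
    (V * diagonal d * Vᴴ).PosSemidef ↔ ∀ i, 0 ≤ d i := by
  rw [← posSemidef_diagonal_iff]
  refine ⟨fun h => ?_, fun h => h.mul_mul_conjTranspose_same V⟩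
  have hD : Vᴴ * (V * diagonal d * Vᴴ) * V = diagonal d := by
    simp only [Matrix.mul_assoc, hV, Matrix.mul_one]
    rw [← Matrix.mul_assoc, hV, Matrix.one_mul]
  exact hD ▸ h.conjTranspose_mul_mul_same V

def vecColumns (W : ι → Matrix m n R) : Matrix (n × m) ι R :=
  of fun p k => vec (W k) p

lemma conjTranspose_vecColumns_mul_vecColumns_apply [Fintype m] [Fintype n]
    [NonUnitalNonAssocSemiring R] [Star R] (W : ι → Matrix m n R) (k l : ι) :
    ((vecColumns W)ᴴ * vecColumns W) k l = ((W k)ᴴ * W l).trace :=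
  star_vec_dotProduct_vec (W k) (W l)

end

lemma choiMatrix_apply {n : ℕ} (Φ : Matrix (Fin n) (Fin n) ℂ → Matrix (Fin n) (Fin n) ℂ)
    (a b c d : Fin n) : choiMatrix Φ (a, b) (c, d) = Φ (single b d 1) a c := by
  simp [choiMatrix, Matrix.sum_apply, single_apply, ite_and]

lemma choiMatrix_sum_smul_conjTranspose_mul_mul {n : ℕ} {ι : Type*} [Fintype ι] [DecidableEq ι]
    (U : ι → Matrix (Fin n) (Fin n) ℂ) (c : ι → ℂ) :
    choiMatrix (fun A => ∑ k, c k • ((U k)ᴴ * A * U k)) =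
      vecColumns (fun k => (U k).map star) * diagonal c *
        (vecColumns fun k => (U k).map star)ᴴ := by
  ext ⟨a, b⟩ ⟨a', b'⟩
  rw [choiMatrix_apply, Matrix.sum_apply, Matrix.mul_apply]
  simp only [Matrix.smul_apply, conjTranspose_mul_single_mul_apply, mul_diagonal, vecColumns]
  simp [mul_comm, mul_left_comm]

/-- For an orthonormal system {U_i} in M_n(ℂ), the map A ↦ ∑ μ_i U_i* A U_i is
completely positive iff all μ_i ≥ 0. -/
theorem completelyPositive_iff_nonneg_coeffs (n m : ℕ)
    (U : Fin m → Matrix (Fin n) (Fin n) ℂ)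
    (hU : ∀ i j, ((U i)ᴴ * U j).trace = if i = j then (1 : ℂ) else 0)
    (μ : Fin m → ℝ)
    (α : Matrix (Fin n) (Fin n) ℂ → Matrix (Fin n) (Fin n) ℂ)
    (hα : ∀ A, α A = ∑ i, (μ i : ℂ) • ((U i)ᴴ * A * U i)) :
    IsCompletelyPositive α ↔ ∀ i, 0 ≤ μ i := by
  have hV : (vecColumns fun k => (U k).map star)ᴴ * vecColumns (fun k => (U k).map star) = 1 := by
    ext k l
    rw [conjTranspose_vecColumns_mul_vecColumns_apply,
      trace_conjTranspose_map_star_mul_map_star, hU, one_apply]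
    exact if_congr eq_comm rfl rfl
  rw [IsCompletelyPositive, funext hα, choiMatrix_sum_smul_conjTranspose_mul_mul,
    posSemidef_mul_diagonal_mul_conjTranspose_iff hV]
  simp only [Complex.zero_le_real]
end

section
/- The set of triples (λ_1, λ_2, λ_3) ∈ ℝ³ satisfying 1 + λ_3 ≥ |λ_1 + λ_2| and 1 − λ_3 ≥ |λ_1 − λ_2| equals the convex hull of the four points (1,1,1), (1,−1,−1), (−1,1,−1), (−1,−1,1). -/
/-!
Write `λ = (x, y, z)`. The numbers `(1 ± x ± y ± z) / 4` with an even number of minus signs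
(the error probabilities of the Pauli channel with eigenvalues `λ`) are the barycentric coordinates
of `λ` with respect to the four vertices: they sum to `1`, their combination of the vertices is
`λ`, and every affine combination of the vertices has its weights as these coordinates.
Unfolding `|·|`, the two inequalities say exactly that all four coordinates are nonnegative,
i.e. that `λ` is a convex combination of the vertices.
-/

open Set

theorem mem_convexHull_range_iff_exists_mem_stdSimplex {R E ι : Type*} [Field R] [LinearOrder R]
    [IsStrictOrderedRing R] [AddCommGroup E] [Module R E] [Fintype ι] {v : ι → E} {x : E} :
    x ∈ convexHull R (range v) ↔ ∃ w ∈ stdSimplex R ι, ∑ i, w i • v i = x := by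
  classical
  have hv : range v = Fintype.linearCombination R v '' range fun i ↦ Pi.single i 1 := by
    rw [← range_comp]
    congr 1
    funext i
    simp only [Function.comp_apply, Fintype.linearCombination_apply, Pi.single_apply, ite_smul,
      one_smul, zero_smul, Finset.sum_ite_eq', Finset.mem_univ, if_true]
  rw [hv, ← LinearMap.image_convexHull, convexHull_rangle_single_eq_stdSimplex]
  simp only [mem_image, Fintype.linearCombination_apply]

def pauliVertex : Fin 4 → ℝ × ℝ × ℝ := ![(1, 1, 1), (1, -1, -1), (-1, 1, -1), (-1, -1, 1)]

noncomputable def pauliWeight (p : ℝ × ℝ × ℝ) : Fin 4 → ℝ :=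
  ![(1 + p.1 + p.2.1 + p.2.2) / 4, (1 + p.1 - p.2.1 - p.2.2) / 4,
    (1 - p.1 + p.2.1 - p.2.2) / 4, (1 - p.1 - p.2.1 + p.2.2) / 4]

theorem range_pauliVertex :
    range pauliVertex = {(1, 1, 1), (1, -1, -1), (-1, 1, -1), (-1, -1, 1)} := by
  simp only [pauliVertex, Matrix.range_cons, Matrix.range_empty, union_empty, singleton_union]

theorem sum_pauliWeight (p : ℝ × ℝ × ℝ) : ∑ i, pauliWeight p i = 1 := by
  simp only [pauliWeight, Fin.sum_univ_four, Matrix.cons_val]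
  ring

theorem sum_pauliWeight_smul (p : ℝ × ℝ × ℝ) : ∑ i, pauliWeight p i • pauliVertex i = p := by
  simp only [pauliWeight, pauliVertex, Fin.sum_univ_four, Matrix.cons_val, Prod.smul_mk,
    smul_eq_mul, Prod.mk_add_mk]
  ext <;> dsimp only <;> ring

theorem pauliWeight_sum_smul {w : Fin 4 → ℝ} (hw : ∑ i, w i = 1) :
    pauliWeight (∑ i, w i • pauliVertex i) = w := by
  rw [Fin.sum_univ_four] at hw
  ext i
  fin_cases i <;>
    simp only [pauliWeight, pauliVertex, Fin.sum_univ_four, Fin.zero_eta, Fin.mk_one,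
      Fin.reduceFinMk, Matrix.cons_val, Prod.smul_mk, smul_eq_mul, mul_one, mul_neg,
      Prod.mk_add_mk] <;>
    linarith

theorem pauli_conditions_iff_pauliWeight_nonneg (p : ℝ × ℝ × ℝ) :
    (|p.1 + p.2.1| ≤ 1 + p.2.2 ∧ |p.1 - p.2.1| ≤ 1 - p.2.2) ↔ ∀ i, 0 ≤ pauliWeight p i := by
  simp only [abs_le, Fin.forall_fin_succ, IsEmpty.forall_iff, pauliWeight, Matrix.cons_val_zero,
    Fin.succ_zero_eq_one, Matrix.cons_val_one, Fin.succ_one_eq_two, Matrix.cons_val,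
    Fin.reduceSucc, and_true]
  constructor
  · rintro ⟨⟨h₁, h₂⟩, h₃, h₄⟩
    refine ⟨?_, ?_, ?_, ?_⟩ <;> linarith
  · rintro ⟨h₁, h₂, h₃, h₄⟩
    refine ⟨⟨?_, ?_⟩, ?_, ?_⟩ <;> linarith

/-- The region 1 + λ₃ ≥ |λ₁ + λ₂| ∧ 1 − λ₃ ≥ |λ₁ − λ₂| in ℝ³ is the convex hull
of the four points (1,1,1), (1,−1,−1), (−1,1,−1), (−1,−1,1). -/
theorem pauli_region_eq_convexHull :
    {p : ℝ × ℝ × ℝ | |p.1 + p.2.1| ≤ 1 + p.2.2 ∧ |p.1 - p.2.1| ≤ 1 - p.2.2}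
      = convexHull ℝ
          ({(1, 1, 1), (1, -1, -1), (-1, 1, -1), (-1, -1, 1)} : Set (ℝ × ℝ × ℝ)) := by
  ext p
  rw [← range_pauliVertex, mem_convexHull_range_iff_exists_mem_stdSimplex, mem_ofPred_eq,
    pauli_conditions_iff_pauliWeight_nonneg]
  constructor
  · intro hp
    exact ⟨pauliWeight p, ⟨hp, sum_pauliWeight p⟩, sum_pauliWeight_smul p⟩
  · rintro ⟨w, ⟨hw₀, hw₁⟩, rfl⟩
    rwa [pauliWeight_sum_smul hw₁]
end

section
/- Let 𝒜 ⊂ M_n(ℂ) be a subalgebra unitarily equivalent to ⊕_l M_{n_l} ⊗ I_{m_l} with all ratios n_l/m_l equal, and {U_i}_{i=1}^{dim 𝒜} an orthonormal basis of 𝒜. Then X ↦ (n / dim 𝒜) Σ_i U_i* X U_i is the trace-preserving conditional expectation from M_n(ℂ) onto the commutant 𝒜′ (i.e., the orthogonal projection onto 𝒜′ with respect to the Hilbert–Schmidt inner product). -/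
open Matrix BigOperators

/-- The commutant of a set of matrices. -/
def matCommutant {ι : Type*} [Fintype ι] [DecidableEq ι]
    (S : Set (Matrix ι ι ℂ)) : Set (Matrix ι ι ℂ) :=
  {X | ∀ A ∈ S, A * X = X * A}

/-- `E` is the trace-preserving conditional expectation onto `S`, i.e. the
orthogonal projection onto `S` w.r.t. the Hilbert–Schmidt inner product:
E X lies in S and X − E X is HS-orthogonal to S. -/
def IsCondExp {ι : Type*} [Fintype ι] [DecidableEq ι]
    (S : Set (Matrix ι ι ℂ)) (E : Matrix ι ι ℂ → Matrix ι ι ℂ) : Prop :=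
  (∀ X, E X ∈ S) ∧ (∀ X, ∀ A ∈ S, (Aᴴ * (X - E X)).trace = 0)

/-- Block-diagonal embedding of ⊕_l M_{n_l} ⊗ I_{m_l}. -/
def blockEmbed {k : ℕ} (nl ml : Fin k → ℕ)
    (A : ∀ l, Matrix (Fin (nl l)) (Fin (nl l)) ℂ) :
    Matrix ((l : Fin k) × (Fin (nl l) × Fin (ml l)))
      ((l : Fin k) × (Fin (nl l) × Fin (ml l))) ℂ :=
  Matrix.of fun p q =>
    if h : p.1 = q.1 then
      if Fin.cast (congrArg ml h) p.2.2 = q.2.2 then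
        A q.1 (Fin.cast (congrArg nl h) p.2.1) q.2.1
      else 0
    else 0

/-!
Write `Φ X = ∑ i, (U i)ᴴ * X * U i`. Expanding `U i * A` and `A * (U i)ᴴ` in the orthonormal
basis shows that `Φ X` commutes with every `A ∈ 𝒜`, and cyclicity of the trace gives
`tr (Bᴴ * Φ X) = tr (Bᴴ * (∑ i, U i * (U i)ᴴ) * X)` for `B ∈ 𝒜′`. Everything therefore reduces to
`∑ i, U i * (U i)ᴴ = (N / n) • 1`. This sum does not depend on the orthonormal basis of `𝒜`;
computed with the rescaled matrix units of `⊕ M_{n_l} ⊗ I_{m_l}` it equals `n_l / m_l` on the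
`l`-th block, a constant `N / n` exactly because all the ratios `n_l / m_l` agree.
-/

open scoped Kronecker

section HilbertSchmidt

variable {n κ ι : Type*} [Fintype n] [Fintype κ] [DecidableEq κ]
  [Fintype ι] [DecidableEq ι]

def HSOrthogonal (W : κ → Matrix n n ℂ) (g : κ → ℂ) : Prop :=
  ∀ p q, ((W p)ᴴ * W q).trace = if p = q then g p else 0

lemma star_trace_conjTranspose_mul (X Y : Matrix n n ℂ) :
    star (Xᴴ * Y).trace = (Yᴴ * X).trace := by
  rw [← trace_conjTranspose, conjTranspose_mul, conjTranspose_conjTranspose]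

namespace HSOrthogonal

lemma sum_smul_eq_of_mem_span {W : κ → Matrix n n ℂ} {g : κ → ℂ} (hW : HSOrthogonal W g)
    (hg : ∀ j, g j ≠ 0) {B : Matrix n n ℂ} (hB : B ∈ Submodule.span ℂ (Set.range W)) :
    ∑ j, ((g j)⁻¹ * ((W j)ᴴ * B).trace) • W j = B := by
  obtain ⟨c, rfl⟩ := (Submodule.mem_span_range_iff_exists_fun ℂ).mp hB
  have hcoeff : ∀ j, ((W j)ᴴ * ∑ i, c i • W i).trace = c j * g j := fun j => by
    simp [Matrix.mul_sum, trace_sum, hW j, mul_comm]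
  simp_rw [hcoeff, mul_comm (c _), inv_mul_cancel_left₀ (hg _)]

lemma sum_trace_smul_eq_of_mem_span {U : κ → Matrix n n ℂ} (hU : HSOrthogonal U 1)
    {B : Matrix n n ℂ} (hB : B ∈ Submodule.span ℂ (Set.range U)) :
    ∑ i, ((U i)ᴴ * B).trace • U i = B := by
  simpa using hU.sum_smul_eq_of_mem_span (fun _ => one_ne_zero) hB

lemma sum_mul_conjTranspose_eq {U : κ → Matrix n n ℂ} {W : ι → Matrix n n ℂ} {g : ι → ℂ}
    (hU : HSOrthogonal U 1) (hW : HSOrthogonal W g) (hg : ∀ j, g j ≠ 0)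
    (hspan : Submodule.span ℂ (Set.range U) = Submodule.span ℂ (Set.range W)) :
    ∑ i, U i * (U i)ᴴ = ∑ j, (g j)⁻¹ • (W j * (W j)ᴴ) := by
  have hUW : ∀ i, U i ∈ Submodule.span ℂ (Set.range W) := fun i =>
    hspan ▸ Submodule.subset_span ⟨i, rfl⟩
  have hWU : ∀ j, W j ∈ Submodule.span ℂ (Set.range U) := fun j =>
    hspan ▸ Submodule.subset_span ⟨j, rfl⟩
  calc ∑ i, U i * (U i)ᴴ
      = ∑ i, (∑ j, ((g j)⁻¹ * ((W j)ᴴ * U i).trace) • W j) * (U i)ᴴ := by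
        simp_rw [hW.sum_smul_eq_of_mem_span hg (hUW _)]
    _ = ∑ j, (g j)⁻¹ • (W j * (∑ i, ((U i)ᴴ * W j).trace • U i)ᴴ) := by
        simp_rw [conjTranspose_sum, conjTranspose_smul, star_trace_conjTranspose_mul,
          Matrix.mul_sum, Finset.sum_mul, Finset.smul_sum, smul_mul, Matrix.mul_smul, smul_smul]
        exact Finset.sum_comm
    _ = ∑ j, (g j)⁻¹ • (W j * (W j)ᴴ) := by
        simp_rw [hU.sum_trace_smul_eq_of_mem_span (hWU _)]

end HSOrthogonal

end HilbertSchmidt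

section Commutant

variable {n κ : Type*} [Fintype n] [DecidableEq n] [Fintype κ]
  {S : Set (Matrix n n ℂ)} {U : κ → Matrix n n ℂ}

lemma sum_conjTranspose_mul_mul_mem_matCommutant [DecidableEq κ]
    (hmul : ∀ A ∈ S, ∀ B ∈ S, A * B ∈ S)
    (hstar : ∀ A ∈ S, Aᴴ ∈ S) (hU : HSOrthogonal U 1) (hmem : ∀ i, U i ∈ S)
    (hspan : S ⊆ Submodule.span ℂ (Set.range U)) (X : Matrix n n ℂ) :
    ∑ i, (U i)ᴴ * X * U i ∈ matCommutant S := by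
  intro A hA
  have hexp : ∀ B ∈ S, ∑ j, ((U j)ᴴ * B).trace • U j = B := fun B hB =>
    hU.sum_trace_smul_eq_of_mem_span (hspan hB)
  have hright : ∀ i, U i * A = ∑ j, ((U j)ᴴ * (U i * A)).trace • U j := fun i =>
    (hexp _ (hmul _ (hmem i) _ hA)).symm
  -- the coefficients of `A * (U j)ᴴ = (U j * Aᴴ)ᴴ` in the `(U i)ᴴ` are those of `U i * A` in `U j`
  have hcoeff : ∀ i j, star ((U i)ᴴ * (U j * Aᴴ)).trace = ((U j)ᴴ * (U i * A)).trace := by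
    intro i j
    rw [star_trace_conjTranspose_mul, conjTranspose_mul, conjTranspose_conjTranspose,
      Matrix.mul_assoc, trace_mul_comm, Matrix.mul_assoc]
  have hleft : ∀ j, A * (U j)ᴴ = ∑ i, ((U j)ᴴ * (U i * A)).trace • (U i)ᴴ := fun j => by
    calc A * (U j)ᴴ = (U j * Aᴴ)ᴴ := by rw [conjTranspose_mul, conjTranspose_conjTranspose]
      _ = (∑ i, ((U i)ᴴ * (U j * Aᴴ)).trace • U i)ᴴ := by
          rw [hexp _ (hmul _ (hmem j) _ (hstar _ hA))]
      _ = ∑ i, ((U j)ᴴ * (U i * A)).trace • (U i)ᴴ := by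
          simp only [conjTranspose_sum, conjTranspose_smul, hcoeff]
  calc A * ∑ j, (U j)ᴴ * X * U j = ∑ j, (A * (U j)ᴴ) * X * U j := by
        rw [Matrix.mul_sum]; simp only [Matrix.mul_assoc]
    _ = ∑ j, ∑ i, ((U j)ᴴ * (U i * A)).trace • ((U i)ᴴ * X * U j) :=
        Finset.sum_congr rfl fun j _ => by simp only [hleft, Finset.sum_mul, smul_mul]
    _ = ∑ i, ∑ j, ((U j)ᴴ * (U i * A)).trace • ((U i)ᴴ * X * U j) := Finset.sum_comm
    _ = ∑ i, (U i)ᴴ * X * (U i * A) := Finset.sum_congr rfl fun i _ => by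
        conv_rhs => rw [hright i, Matrix.mul_sum]
        simp only [Matrix.mul_smul]
    _ = (∑ i, (U i)ᴴ * X * U i) * A := by
        rw [Finset.sum_mul]; simp only [Matrix.mul_assoc]

lemma trace_conjTranspose_mul_sum_conjTranspose_mul_mul (hstar : ∀ A ∈ S, Aᴴ ∈ S)
    (hmem : ∀ i, U i ∈ S) {A : Matrix n n ℂ} (hA : A ∈ matCommutant S) (X : Matrix n n ℂ) :
    (Aᴴ * ∑ i, (U i)ᴴ * X * U i).trace = (Aᴴ * (∑ i, U i * (U i)ᴴ) * X).trace := by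
  have hcomm : ∀ i, Aᴴ * U i = U i * Aᴴ := fun i => by
    simpa using congrArg conjTranspose (hA _ (hstar _ (hmem i)))
  simp_rw [Matrix.mul_sum, Finset.sum_mul, trace_sum]
  refine Finset.sum_congr rfl fun i _ => ?_
  calc (Aᴴ * ((U i)ᴴ * X * U i)).trace = (U i * Aᴴ * (U i)ᴴ * X).trace := by
        rw [← Matrix.mul_assoc, trace_mul_comm]; simp only [Matrix.mul_assoc]
    _ = (Aᴴ * (U i * (U i)ᴴ) * X).trace := by rw [← hcomm, Matrix.mul_assoc Aᴴ]

theorem isCondExp_matCommutant [DecidableEq κ] (hmul : ∀ A ∈ S, ∀ B ∈ S, A * B ∈ S)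
    (hstar : ∀ A ∈ S, Aᴴ ∈ S) (hU : HSOrthogonal U 1) (hmem : ∀ i, U i ∈ S)
    (hspan : S ⊆ Submodule.span ℂ (Set.range U)) {c : ℂ} (hc : c • ∑ i, U i * (U i)ᴴ = 1) :
    IsCondExp (matCommutant S) fun X => c • ∑ i, (U i)ᴴ * X * U i := by
  refine ⟨fun X A hA => ?_, fun X A hA => ?_⟩
  · rw [Matrix.mul_smul, Matrix.smul_mul,
      sum_conjTranspose_mul_mul_mem_matCommutant hmul hstar hU hmem hspan X A hA]
  · rw [Matrix.mul_sub, trace_sub, Matrix.mul_smul, trace_smul,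
      trace_conjTranspose_mul_sum_conjTranspose_mul_mul hstar hmem hA, ← trace_smul,
      ← Matrix.smul_mul, ← Matrix.mul_smul, hc, Matrix.mul_one, sub_self]

omit [Fintype κ] in
lemma IsCondExp.trace_eq {E : Matrix n n ℂ → Matrix n n ℂ}
    (hE : IsCondExp (matCommutant S) E) (X : Matrix n n ℂ) : (E X).trace = X.trace := by
  have h := hE.2 X 1 fun B _ => by rw [Matrix.mul_one, Matrix.one_mul]
  rwa [conjTranspose_one, Matrix.one_mul, trace_sub, sub_eq_zero, eq_comm] at h

end Commutant

section Block

variable {k : ℕ} (nl ml : Fin k → ℕ)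

abbrev BlockIndex := (l : Fin k) × (Fin (nl l) × Fin (ml l))

abbrev BlockAlgebra := ∀ l, Matrix (Fin (nl l)) (Fin (nl l)) ℂ

lemma blockEmbed_eq_blockDiagonal' (A : BlockAlgebra nl) :
    blockEmbed nl ml A =
      blockDiagonal' fun l => A l ⊗ₖ (1 : Matrix (Fin (ml l)) (Fin (ml l)) ℂ) := by
  ext ⟨l, a, s⟩ ⟨l', b, t⟩
  rcases eq_or_ne l l' with rfl | h
  · simp [blockEmbed, one_apply]
  · simp [blockEmbed, blockDiagonal'_apply_ne _ _ _ h, h]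

lemma trace_blockEmbed (A : BlockAlgebra nl) :
    (blockEmbed nl ml A).trace = ∑ l, (ml l : ℂ) * (A l).trace := by
  simp [blockEmbed_eq_blockDiagonal', trace_blockDiagonal', trace_kronecker, mul_comm]

noncomputable def blockEmbedStarAlgHom :
    BlockAlgebra nl →⋆ₐ[ℂ] Matrix (BlockIndex nl ml) (BlockIndex nl ml) ℂ where
  toFun := blockEmbed nl ml
  map_one' := by
    rw [blockEmbed_eq_blockDiagonal']
    simp_rw [Pi.one_apply, one_kronecker_one]
    exact blockDiagonal'_one
  map_mul' A B := by
    simp_rw [blockEmbed_eq_blockDiagonal', Pi.mul_apply, ← blockDiagonal'_mul,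
      ← mul_kronecker_mul, mul_one]
  map_zero' := by
    rw [blockEmbed_eq_blockDiagonal']
    simp_rw [Pi.zero_apply, zero_kronecker]
    exact blockDiagonal'_zero
  map_add' A B := by
    simp_rw [blockEmbed_eq_blockDiagonal', Pi.add_apply, add_kronecker]
    exact blockDiagonal'_add (fun l => A l ⊗ₖ 1) (fun l => B l ⊗ₖ 1)
  commutes' c := by
    simp_rw [Algebra.algebraMap_eq_smul_one, blockEmbed_eq_blockDiagonal', Pi.smul_apply,
      Pi.one_apply, smul_kronecker, one_kronecker_one, ← blockDiagonal'_one, ← blockDiagonal'_smul]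
    rfl
  map_star' A := by
    simp [blockEmbed_eq_blockDiagonal', conjTranspose_kronecker, star_eq_conjTranspose]

lemma blockEmbed_congr {A B : BlockAlgebra nl} (h : ∀ l, 0 < nl l → 0 < ml l → A l = B l) :
    blockEmbed nl ml A = blockEmbed nl ml B := by
  ext p ⟨l, a, s⟩
  simp only [blockEmbed, of_apply]
  split_ifs <;> simp [h l a.pos s.pos]

lemma nl_mul_card_blockIndex (hratio : ∀ l l', nl l * ml l' = nl l' * ml l) (l : Fin k) :
    nl l * Fintype.card (BlockIndex nl ml) = (∑ l', nl l' ^ 2) * ml l := by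
  simp only [Fintype.card_sigma, Fintype.card_prod, Fintype.card_fin, Finset.mul_sum,
    Finset.sum_mul]
  refine Finset.sum_congr rfl fun l' _ => ?_
  rw [mul_left_comm, hratio]
  ring

lemma ml_pos_of_nl_pos [Nonempty (BlockIndex nl ml)]
    (hratio : ∀ l l', nl l * ml l' = nl l' * ml l) {l : Fin k} (hl : 0 < nl l) : 0 < ml l := by
  obtain ⟨p, a, s⟩ := ‹Nonempty (BlockIndex nl ml)›
  exact Nat.pos_of_mul_pos_left (hratio l p ▸ Nat.mul_pos hl s.pos)

end Block

section UnitaryConj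

variable {k : ℕ} {nl ml : Fin k → ℕ} (V : unitary (Matrix (BlockIndex nl ml) (BlockIndex nl ml) ℂ))

noncomputable def conjBlockEmbed :
    BlockAlgebra nl →⋆ₐ[ℂ] Matrix (BlockIndex nl ml) (BlockIndex nl ml) ℂ :=
  (Unitary.conjStarAlgAut ℂ _ V).toStarAlgHom.comp (blockEmbedStarAlgHom nl ml)

lemma conjBlockEmbed_apply (A : BlockAlgebra nl) :
    conjBlockEmbed V A = (V : Matrix _ _ ℂ) * blockEmbed nl ml A * (V : Matrix _ _ ℂ)ᴴ := rfl

lemma trace_conjBlockEmbed (A : BlockAlgebra nl) :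
    (conjBlockEmbed V A).trace = ∑ l, (ml l : ℂ) * (A l).trace := by
  rw [conjBlockEmbed_apply, trace_mul_comm, ← Matrix.mul_assoc, ← star_eq_conjTranspose,
    Unitary.coe_star_mul_self, Matrix.one_mul, trace_blockEmbed]

lemma conjBlockEmbed_congr {A B : BlockAlgebra nl} (h : ∀ l, 0 < nl l → 0 < ml l → A l = B l) :
    conjBlockEmbed V A = conjBlockEmbed V B := by
  rw [conjBlockEmbed_apply, conjBlockEmbed_apply, blockEmbed_congr nl ml h]

end UnitaryConj

section MatrixUnits

variable {k : ℕ} (nl : Fin k → ℕ)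

def blockUnit (j : (l : Fin k) × (Fin (nl l) × Fin (nl l))) : BlockAlgebra nl :=
  Pi.single j.1 (single j.2.1 j.2.2 1)

lemma span_range_blockUnit : Submodule.span ℂ (Set.range (blockUnit nl)) = ⊤ := by
  convert (Pi.basis fun l => stdBasis ℂ (Fin (nl l)) (Fin (nl l))).span_eq
  ext ⟨l, a, b⟩ : 1
  rw [Pi.basis_apply, stdBasis_eq_single, blockUnit]

lemma blockUnit_mul_star (l : Fin k) (a b : Fin (nl l)) :
    blockUnit nl ⟨l, a, b⟩ * star (blockUnit nl ⟨l, a, b⟩) = Pi.single l (single a a 1) := by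
  simp [blockUnit, ← Pi.single_mul, star_eq_conjTranspose]

lemma sum_smul_blockUnit_mul_star (c : Fin k → ℂ) :
    ∑ j, c j.1 • (blockUnit nl j * star (blockUnit nl j)) = fun l => (nl l * c l) • 1 := by
  funext l
  simp_rw [← Finset.univ_sigma_univ, Finset.sum_sigma, Fintype.sum_prod_type, blockUnit_mul_star,
    Finset.sum_apply, Pi.smul_apply]
  rw [Finset.sum_eq_single l]
  · simp only [Pi.single_eq_same, Finset.sum_const, Finset.card_univ, Fintype.card_fin]
    rw [← Finset.smul_sum, ← Finset.smul_sum, sum_single_one, mul_smul, Nat.cast_smul_eq_nsmul]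
  · intro l' _ hl
    simp [Pi.single_eq_of_ne' hl]
  · simp

variable {ml : Fin k → ℕ} (V : unitary (Matrix (BlockIndex nl ml) (BlockIndex nl ml) ℂ))

lemma trace_conjTranspose_conjBlockEmbed_blockUnit_mul
    (j : (l : Fin k) × (Fin (nl l) × Fin (nl l))) (A : BlockAlgebra nl) :
    ((conjBlockEmbed V (blockUnit nl j))ᴴ * conjBlockEmbed V A).trace
      = ml j.1 * A j.1 j.2.1 j.2.2 := by
  rw [← star_eq_conjTranspose, ← map_star, ← map_mul, trace_conjBlockEmbed,
    Finset.sum_eq_single j.1]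
  · simp [blockUnit, star_eq_conjTranspose, trace_single_mul]
  · intro l _ hl
    simp [blockUnit, Pi.single_eq_of_ne hl]
  · simp

lemma hsOrthogonal_conjBlockEmbed_blockUnit :
    HSOrthogonal (conjBlockEmbed V ∘ blockUnit nl) (fun j => (ml j.1 : ℂ)) := by
  intro p q
  rw [Function.comp_apply, Function.comp_apply, trace_conjTranspose_conjBlockEmbed_blockUnit_mul]
  obtain ⟨l, a, b⟩ := p
  obtain ⟨l', a', b'⟩ := q
  rcases eq_or_ne l l' with rfl | h
  · simp [blockUnit, single_apply, eq_comm]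
  · simp [blockUnit, h]

lemma span_range_conjBlockEmbed_blockUnit :
    Submodule.span ℂ (Set.range (conjBlockEmbed V ∘ blockUnit nl))
      = Submodule.span ℂ (Set.range (conjBlockEmbed V)) := by
  let φ := (conjBlockEmbed V).toAlgHom.toLinearMap
  calc Submodule.span ℂ (Set.range (conjBlockEmbed V ∘ blockUnit nl))
      = Submodule.span ℂ (φ '' Set.range (blockUnit nl)) := by rw [Set.range_comp]; rfl
    _ = Submodule.span ℂ (LinearMap.range φ) := by
        rw [Submodule.span_image, span_range_blockUnit, Submodule.map_top, Submodule.span_eq]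
    _ = Submodule.span ℂ (Set.range (conjBlockEmbed V)) := by rw [LinearMap.coe_range]; rfl

end MatrixUnits

theorem card_div_smul_sum_mul_conjTranspose_eq_one {k : ℕ} {nl ml : Fin k → ℕ}
    (hratio : ∀ l l', nl l * ml l' = nl l' * ml l)
    (V : unitary (Matrix (BlockIndex nl ml) (BlockIndex nl ml) ℂ))
    {κ : Type*} [Fintype κ] [DecidableEq κ]
    {U : κ → Matrix (BlockIndex nl ml) (BlockIndex nl ml) ℂ} (hU : HSOrthogonal U 1)
    (hspan : Submodule.span ℂ (Set.range U) = Submodule.span ℂ (Set.range (conjBlockEmbed V))) :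
    ((Fintype.card (BlockIndex nl ml) : ℂ) / ((∑ l, nl l ^ 2 : ℕ) : ℂ)) • ∑ i, U i * (U i)ᴴ
      = 1 := by
  rcases isEmpty_or_nonempty (BlockIndex nl ml) with _ | _
  · exact Subsingleton.elim _ _
  have hml : ∀ j : (l : Fin k) × (Fin (nl l) × Fin (nl l)), (ml j.1 : ℂ) ≠ 0 := fun j =>
    Nat.cast_ne_zero.mpr (ml_pos_of_nl_pos nl ml hratio j.2.1.pos).ne'
  rw [hU.sum_mul_conjTranspose_eq (hsOrthogonal_conjBlockEmbed_blockUnit nl V) hml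
    (hspan.trans (span_range_conjBlockEmbed_blockUnit nl V).symm)]
  simp only [Function.comp_apply, ← star_eq_conjTranspose, ← map_star, ← map_mul, ← map_smul,
    ← map_sum]
  rw [sum_smul_blockUnit_mul_star nl fun l => (ml l : ℂ)⁻¹, ← map_one (conjBlockEmbed V)]
  refine conjBlockEmbed_congr V fun l hn hm => ?_
  have hN : ((∑ l, nl l ^ 2 : ℕ) : ℂ) ≠ 0 := Nat.cast_ne_zero.mpr
    (Finset.sum_pos' (fun _ _ => Nat.zero_le _) ⟨l, Finset.mem_univ _, pow_pos hn 2⟩).ne'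
  have hm' : (ml l : ℂ) ≠ 0 := Nat.cast_ne_zero.mpr hm.ne'
  have hkey : (nl l : ℂ) * Fintype.card (BlockIndex nl ml) = (∑ l, nl l ^ 2 : ℕ) * ml l := by
    exact_mod_cast nl_mul_card_blockIndex nl ml hratio l
  rw [Pi.smul_apply, Pi.one_apply, smul_smul]
  convert one_smul ℂ (1 : Matrix (Fin (nl l)) (Fin (nl l)) ℂ)
  field_simp
  linear_combination hkey

/-- Let 𝒜 ⊂ M_n(ℂ) be unitarily equivalent to ⊕_l M_{n_l} ⊗ I_{m_l} with all
ratios n_l/m_l equal, and {U_i}_{i=1}^{dim 𝒜} a Hilbert–Schmidt orthonormal basis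
of 𝒜. Then X ↦ (n / dim 𝒜) ∑_i U_i* X U_i is the trace-preserving conditional
expectation from M_n(ℂ) onto the commutant 𝒜′. -/
theorem condExp_onto_commutant (k : ℕ) (nl ml : Fin k → ℕ)
    (V : Matrix ((l : Fin k) × (Fin (nl l) × Fin (ml l)))
      ((l : Fin k) × (Fin (nl l) × Fin (ml l))) ℂ)
    (hV : Vᴴ * V = 1 ∧ V * Vᴴ = 1)
    (𝒜 : Set (Matrix ((l : Fin k) × (Fin (nl l) × Fin (ml l)))
      ((l : Fin k) × (Fin (nl l) × Fin (ml l))) ℂ))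
    (h𝒜 : 𝒜 = {X | ∃ A, X = V * blockEmbed nl ml A * Vᴴ})
    (hratio : ∀ l l', nl l * ml l' = nl l' * ml l)
    (N : ℕ) (hN : N = ∑ l, (nl l) ^ 2)
    (U : Fin N → Matrix ((l : Fin k) × (Fin (nl l) × Fin (ml l)))
      ((l : Fin k) × (Fin (nl l) × Fin (ml l))) ℂ)
    (hmem : ∀ i, U i ∈ 𝒜)
    (horth : ∀ i j, ((U i)ᴴ * U j).trace = if i = j then (1 : ℂ) else 0)
    (hspan : Submodule.span ℂ (Set.range U) = Submodule.span ℂ 𝒜)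
    (E : Matrix ((l : Fin k) × (Fin (nl l) × Fin (ml l)))
        ((l : Fin k) × (Fin (nl l) × Fin (ml l))) ℂ →
      Matrix ((l : Fin k) × (Fin (nl l) × Fin (ml l)))
        ((l : Fin k) × (Fin (nl l) × Fin (ml l))) ℂ)
    (hE : ∀ X, E X = ((Fintype.card ((l : Fin k) × (Fin (nl l) × Fin (ml l))) : ℂ) / (N : ℂ))
      • ∑ i, (U i)ᴴ * X * U i) :
    IsCondExp (matCommutant 𝒜) E ∧ ∀ X, (E X).trace = X.trace := by
  subst hN
  let u : unitary (Matrix (BlockIndex nl ml) (BlockIndex nl ml) ℂ) := ⟨V, Unitary.mem_iff.mpr hV⟩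
  obtain rfl : 𝒜 = Set.range (conjBlockEmbed u) := by
    rw [h𝒜]; ext; simp [conjBlockEmbed_apply, u, eq_comm]
  obtain rfl : E = _ := funext hE
  have hcondExp := isCondExp_matCommutant
    (by rintro _ ⟨A, rfl⟩ _ ⟨B, rfl⟩; exact ⟨A * B, map_mul _ A B⟩)
    (by rintro _ ⟨A, rfl⟩; exact ⟨star A, map_star _ A⟩)
    horth hmem (fun X hX => hspan ▸ Submodule.subset_span hX)
    (card_div_smul_sum_mul_conjTranspose_eq_one hratio u horth hspan)
  exact ⟨hcondExp, hcondExp.trace_eq⟩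
end

section
/- Let 𝒜_1, 𝒜_2 be complementary subalgebras of M_n(ℂ) whose products span M_n. If {U_i} is an orthonormal basis of 𝒜_1, then E(X) = (n / dim 𝒜_1) Σ_i U_i* X U_i is the trace-preserving conditional expectation of M_n onto 𝒜_1′, and (dim 𝒜_1)(dim 𝒜_2) = n². -/
open Matrix BigOperators

/-- Complementarity (quasi-orthogonality) of two sets of matrices. -/
def Complementary {ι : Type*} [Fintype ι] [DecidableEq ι]
    (S T : Set (Matrix ι ι ℂ)) : Prop :=
  ∀ A ∈ S, ∀ B ∈ T, (Aᴴ * B).trace = Aᴴ.trace * B.trace / (Fintype.card ι : ℂ)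

/-!
Complementarity makes the products `U i * W j` of Hilbert–Schmidt orthonormal bases of `𝒜₁` and
`𝒜₂` pairwise orthogonal, each of squared norm `1 / n`; since they span `M_n` they form a basis,
so `m₁ m₂ = n²`. Computing the trace of `X ↦ A X` on `M_n` in this basis, for `A ∈ 𝒜₁`, gives
`m₂ tr(A T) = n tr A` with `T = ∑ U i U iᴴ ∈ 𝒜₁`, which forces `T = (m₁ / n) • 1`.
Expanding `U i A` and `A U iᴴ` in the basis `U` shows that `∑ U iᴴ X U i` commutes with `𝒜₁`,
and for `B` in the commutant `tr(B ∑ U iᴴ X U i) = tr(B T X)`, which, `T` being scalar, yields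
both trace preservation and orthogonality of `X - E X` to the commutant.
-/

namespace Matrix

def IsTraceDual {R ι κ : Type*} [Semiring R] [Fintype ι] [DecidableEq κ]
    (P Q : κ → Matrix ι ι R) : Prop :=
  ∀ k l, (P k * Q l).trace = if k = l then 1 else 0

section TraceDual

variable {K ι κ : Type*} [Field K] [Fintype ι] [Fintype κ] [DecidableEq κ]

namespace IsTraceDual

variable {P Q : κ → Matrix ι ι K}

theorem linearIndependent (h : IsTraceDual P Q) : LinearIndependent K Q := by
  rw [Fintype.linearIndependent_iff]
  intro g hg k
  simpa [Matrix.mul_sum, h k] using congr_arg (fun X ↦ (P k * X).trace) hg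

theorem eq_sum_of_mem_span (h : IsTraceDual P Q) {X : Matrix ι ι K}
    (hX : X ∈ Submodule.span K (Set.range Q)) : X = ∑ k, (P k * X).trace • Q k := by
  induction hX using Submodule.span_induction with
  | mem _ hY => obtain ⟨l, rfl⟩ := hY; simp [h _ l]
  | zero => simp
  | add X Y _ _ hX hY =>
    conv_lhs => rw [hX, hY]
    simp [Matrix.mul_add, add_smul, Finset.sum_add_distrib]
  | smul c X _ hX =>
    conv_lhs => rw [hX]
    simp [Finset.smul_sum, smul_smul]

noncomputable def basis (h : IsTraceDual P Q) (hQ : Submodule.span K (Set.range Q) = ⊤) :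
    Module.Basis κ K (Matrix ι ι K) :=
  .mk h.linearIndependent hQ.ge

theorem basis_repr_apply (h : IsTraceDual P Q) (hQ : Submodule.span K (Set.range Q) = ⊤)
    (X : Matrix ι ι K) (k : κ) : (h.basis hQ).repr X k = (P k * X).trace := by
  have hX : X = ∑ l, (P l * X).trace • h.basis hQ l := by
    simpa [basis] using h.eq_sum_of_mem_span (hQ ▸ Submodule.mem_top)
  conv_lhs => rw [hX]
  rw [Module.Basis.repr_sum_self]

theorem trace_mulLeft_eq_sum (h : IsTraceDual P Q) (hQ : Submodule.span K (Set.range Q) = ⊤)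
    (A : Matrix ι ι K) :
    LinearMap.trace K _ (LinearMap.mulLeft K A) = ∑ k, (P k * A * Q k).trace := by
  rw [LinearMap.trace_eq_matrix_trace K (h.basis hQ), Matrix.trace]
  refine Finset.sum_congr rfl fun k _ ↦ ?_
  rw [diag_apply, LinearMap.toMatrix_apply, LinearMap.mulLeft_apply, basis_repr_apply,
    basis, Module.Basis.mk_apply, Matrix.mul_assoc]

theorem card_eq_sq (h : IsTraceDual P Q) (hQ : Submodule.span K (Set.range Q) = ⊤) :
    Fintype.card κ = Fintype.card ι ^ 2 := by
  rw [← Module.finrank_eq_card_basis (h.basis hQ), Module.finrank_matrix, Module.finrank_self,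
    mul_one, sq]

end IsTraceDual

theorem isTraceDual_single [DecidableEq ι] :
    IsTraceDual (fun p : ι × ι ↦ single p.2 p.1 (1 : K)) (fun p ↦ single p.1 p.2 1) := by
  rintro ⟨i, j⟩ ⟨k, l⟩
  by_cases hik : i = k
  · subst hik
    by_cases hjl : j = l
    · simp [hjl, single_mul_single_same]
    · simp [hjl, single_mul_single_same, trace_single_eq_of_ne]
  · simp [hik, single_mul_single_of_ne]

theorem span_range_single [DecidableEq ι] :
    Submodule.span K (Set.range fun p : ι × ι ↦ single p.1 p.2 (1 : K)) = ⊤ := by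
  have h : (fun p : ι × ι ↦ single p.1 p.2 (1 : K)) = stdBasis K ι ι :=
    funext fun p ↦ (stdBasis_eq_single K p.1 p.2).symm
  rw [h, (stdBasis K ι ι).span_eq]

theorem trace_mulLeft (A : Matrix ι ι K) :
    LinearMap.trace K _ (LinearMap.mulLeft K A) = Fintype.card ι * A.trace := by
  classical
  rw [isTraceDual_single.trace_mulLeft_eq_sum span_range_single, Fintype.sum_prod_type]
  simp [Matrix.trace, Finset.mul_sum]

theorem IsTraceDual.sum_trace_mul_mul {P Q : κ → Matrix ι ι K} (h : IsTraceDual P Q)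
    (hQ : Submodule.span K (Set.range Q) = ⊤) (A : Matrix ι ι K) :
    ∑ k, (P k * A * Q k).trace = Fintype.card ι * A.trace := by
  rw [← h.trace_mulLeft_eq_sum hQ, trace_mulLeft]

end TraceDual

theorem trace_mul_sum_conjTranspose_mul_mul {R ι κ : Type*} [CommSemiring R] [Star R]
    [Fintype ι] [Fintype κ] {U : κ → Matrix ι ι R} {B : Matrix ι ι R}
    (hB : ∀ i, U i * B = B * U i) (X : Matrix ι ι R) :
    (B * ∑ i, (U i)ᴴ * X * U i).trace = (B * (∑ i, U i * (U i)ᴴ) * X).trace := by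
  simp only [Matrix.mul_sum, Matrix.sum_mul, trace_sum]
  refine Finset.sum_congr rfl fun i _ ↦ ?_
  rw [← Matrix.mul_assoc, trace_mul_comm, ← Matrix.mul_assoc, ← Matrix.mul_assoc, hB,
    Matrix.mul_assoc B, Matrix.mul_assoc B]

open scoped ComplexOrder in
theorem eq_smul_one_of_forall_trace_mul_eq {𝕜 ι : Type*} [RCLike 𝕜] [Fintype ι]
    [DecidableEq ι] {S : StarSubalgebra 𝕜 (Matrix ι ι 𝕜)} {T : Matrix ι ι 𝕜} (hT : T ∈ S)
    {c : 𝕜} (h : ∀ A ∈ S, (A * T).trace = c * A.trace) : T = c • 1 := by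
  have hD : T - c • 1 ∈ S := sub_mem hT (S.smul_mem S.one_mem c)
  have hDT := h _ (star_mem hD)
  rw [star_eq_conjTranspose] at hDT
  rw [← sub_eq_zero, ← trace_conjTranspose_mul_self_eq_zero_iff, Matrix.mul_sub, trace_sub, hDT,
    Matrix.mul_smul, Matrix.mul_one, trace_smul, smul_eq_mul, sub_self]

end Matrix

open scoped Pointwise in
theorem span_range_mul_eq_top {K R κ₁ κ₂ : Type*} [CommSemiring K] [Semiring R] [Algebra K R]
    {s t : Set R} {U : κ₁ → R} {W : κ₂ → R}
    (hst : Submodule.span K {X | ∃ A ∈ s, ∃ B ∈ t, X = A * B} = ⊤)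
    (hU : s ⊆ Submodule.span K (Set.range U)) (hW : t ⊆ Submodule.span K (Set.range W)) :
    Submodule.span K (Set.range fun p : κ₁ × κ₂ ↦ U p.1 * W p.2) = ⊤ := by
  have hst' : {X | ∃ A ∈ s, ∃ B ∈ t, X = A * B} = s * t := by
    ext X
    simp [Set.mem_mul, eq_comm]
  have hUW : Set.range U * Set.range W = Set.range fun p : κ₁ × κ₂ ↦ U p.1 * W p.2 := by
    ext X
    simp [Set.mem_mul]
  rw [eq_top_iff, ← hst, hst', ← hUW, ← Submodule.span_mul_span, ← Submodule.span_mul_span]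
  exact mul_le_mul' (Submodule.span_le.2 hU) (Submodule.span_le.2 hW)

/-- `HS` refers to the Hilbert–Schmidt inner product `⟪A, B⟫ = tr (Aᴴ B)`. -/
structure IsHSOrthonormalBasis {ι κ : Type*} [Fintype ι] [DecidableEq κ]
    (S : Set (Matrix ι ι ℂ)) (U : κ → Matrix ι ι ℂ) : Prop where
  mem : ∀ i, U i ∈ S
  isTraceDual : IsTraceDual (fun i ↦ (U i)ᴴ) U
  subset_span : S ⊆ Submodule.span ℂ (Set.range U)

section OrthonormalBasis

variable {ι κ₁ κ₂ : Type*} [Fintype ι] [DecidableEq ι] [DecidableEq κ₁] [DecidableEq κ₂]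

theorem conjTranspose_mem_matCommutant {𝒜 : StarSubalgebra ℂ (Matrix ι ι ℂ)}
    {A : Matrix ι ι ℂ} (hA : A ∈ matCommutant (𝒜 : Set (Matrix ι ι ℂ))) :
    Aᴴ ∈ matCommutant (𝒜 : Set (Matrix ι ι ℂ)) := fun B hB ↦ by
  simpa [star_eq_conjTranspose] using congrArg conjTranspose (hA _ (star_mem hB)).symm

namespace IsHSOrthonormalBasis

variable [Fintype κ₁] {𝒜 : StarSubalgebra ℂ (Matrix ι ι ℂ)} {U : κ₁ → Matrix ι ι ℂ}

theorem sum_conjTranspose_mul_mul_mem_matCommutant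
    (hU : IsHSOrthonormalBasis (𝒜 : Set (Matrix ι ι ℂ)) U) (X : Matrix ι ι ℂ) :
    ∑ i, (U i)ᴴ * X * U i ∈ matCommutant (𝒜 : Set (Matrix ι ι ℂ)) := by
  intro A hA
  set c : κ₁ → κ₁ → ℂ := fun i j ↦ ((U i)ᴴ * (U j * A)).trace
  have hright : ∀ i, U i * A = ∑ j, c j i • U j := fun i ↦
    hU.isTraceDual.eq_sum_of_mem_span (hU.subset_span (mul_mem (hU.mem i) hA))
  have hleft : ∀ i, A * (U i)ᴴ = ∑ j, c i j • (U j)ᴴ := by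
    intro i
    have h := congrArg conjTranspose <|
      hU.isTraceDual.eq_sum_of_mem_span (hU.subset_span (mul_mem (hU.mem i) (star_mem hA)))
    simp only [conjTranspose_sum, conjTranspose_smul, conjTranspose_mul, star_eq_conjTranspose,
      conjTranspose_conjTranspose, ← trace_conjTranspose] at h
    rw [h]
    refine Finset.sum_congr rfl fun j _ ↦ ?_
    rw [Matrix.mul_assoc, trace_mul_comm, Matrix.mul_assoc]
  calc A * ∑ i, (U i)ᴴ * X * U i = ∑ i, ∑ j, c i j • ((U j)ᴴ * X * U i) := by
        simp only [Matrix.mul_sum, ← Matrix.mul_assoc, hleft, Matrix.sum_mul, Matrix.smul_mul]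
    _ = ∑ j, ∑ i, c i j • ((U j)ᴴ * X * U i) := Finset.sum_comm
    _ = (∑ i, (U i)ᴴ * X * U i) * A := by
        simp only [Matrix.sum_mul, Matrix.mul_assoc, hright, Matrix.mul_sum, Matrix.mul_smul]

theorem isCondExp_matCommutant (hU : IsHSOrthonormalBasis (𝒜 : Set (Matrix ι ι ℂ)) U) {c : ℂ}
    (hc : c ≠ 0) (hT : ∑ i, U i * (U i)ᴴ = c • 1) :
    IsCondExp (matCommutant (𝒜 : Set (Matrix ι ι ℂ))) (fun X ↦ c⁻¹ • ∑ i, (U i)ᴴ * X * U i) ∧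
      ∀ X, (c⁻¹ • ∑ i, (U i)ᴴ * X * U i).trace = X.trace := by
  have htrace : ∀ {B : Matrix ι ι ℂ}, (∀ i, U i * B = B * U i) → ∀ X,
      (B * (c⁻¹ • ∑ i, (U i)ᴴ * X * U i)).trace = (B * X).trace := fun hB X ↦ by
    rw [Matrix.mul_smul, trace_smul, trace_mul_sum_conjTranspose_mul_mul hB, hT, Matrix.mul_smul,
      Matrix.mul_one, Matrix.smul_mul, trace_smul, smul_smul, inv_mul_cancel₀ hc, one_smul]
  refine ⟨⟨fun X A hA ↦ ?_, fun X A hA ↦ ?_⟩, fun X ↦ ?_⟩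
  · rw [Matrix.mul_smul, Matrix.smul_mul, hU.sum_conjTranspose_mul_mul_mem_matCommutant X A hA]
  · rw [Matrix.mul_sub, trace_sub,
      htrace (fun i ↦ conjTranspose_mem_matCommutant hA (U i) (hU.mem i)), sub_self]
  · simpa using htrace (B := 1) (by simp) X

end IsHSOrthonormalBasis

namespace Complementary

variable {𝒜₁ 𝒜₂ : StarSubalgebra ℂ (Matrix ι ι ℂ)}

theorem trace_mul {S : StarSubalgebra ℂ (Matrix ι ι ℂ)} {T : Set (Matrix ι ι ℂ)}
    (hc : Complementary (S : Set (Matrix ι ι ℂ)) T) {A B : Matrix ι ι ℂ} (hA : A ∈ S)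
    (hB : B ∈ T) : (A * B).trace = A.trace * B.trace / Fintype.card ι := by
  simpa [star_eq_conjTranspose] using hc _ (star_mem hA) _ hB

theorem isTraceDual_mul [Nonempty ι]
    (hc : Complementary (𝒜₁ : Set (Matrix ι ι ℂ)) (𝒜₂ : Set (Matrix ι ι ℂ)))
    {U : κ₁ → Matrix ι ι ℂ} {W : κ₂ → Matrix ι ι ℂ} (hUmem : ∀ i, U i ∈ 𝒜₁)
    (hU : IsTraceDual (fun i ↦ (U i)ᴴ) U) (hWmem : ∀ j, W j ∈ 𝒜₂)
    (hW : IsTraceDual (fun j ↦ (W j)ᴴ) W) :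
    IsTraceDual (fun p : κ₁ × κ₂ ↦ (Fintype.card ι : ℂ) • (U p.1 * W p.2)ᴴ)
      (fun p ↦ U p.1 * W p.2) := by
  rintro ⟨i, j⟩ ⟨k, l⟩
  have hn : (Fintype.card ι : ℂ) ≠ 0 := Nat.cast_ne_zero.2 Fintype.card_ne_zero
  have hcycle : ((U i * W j)ᴴ * (U k * W l)).trace = ((U i)ᴴ * U k * (W l * (W j)ᴴ)).trace := by
    rw [conjTranspose_mul, Matrix.mul_assoc, trace_mul_comm]
    simp only [Matrix.mul_assoc]
  rw [Matrix.smul_mul, trace_smul, hcycle,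
    hc.trace_mul (A := (U i)ᴴ * U k) (B := W l * (W j)ᴴ) (mul_mem (star_mem (hUmem i)) (hUmem k))
      (mul_mem (hWmem l) (star_mem (hWmem j))),
    trace_mul_comm (W l), hU, hW]
  by_cases hik : i = k <;> by_cases hjl : j = l <;> simp [hik, hjl, hn]

variable [Fintype κ₁] [Fintype κ₂] [Nonempty ι]
  {U : κ₁ → Matrix ι ι ℂ} {W : κ₂ → Matrix ι ι ℂ}

theorem card_mul_card
    (hc : Complementary (𝒜₁ : Set (Matrix ι ι ℂ)) (𝒜₂ : Set (Matrix ι ι ℂ)))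
    (hprod : Submodule.span ℂ {X : Matrix ι ι ℂ | ∃ A ∈ 𝒜₁, ∃ B ∈ 𝒜₂, X = A * B} = ⊤)
    (hU : IsHSOrthonormalBasis (𝒜₁ : Set (Matrix ι ι ℂ)) U)
    (hW : IsHSOrthonormalBasis (𝒜₂ : Set (Matrix ι ι ℂ)) W) :
    Fintype.card κ₁ * Fintype.card κ₂ = Fintype.card ι ^ 2 := by
  rw [← Fintype.card_prod]
  exact (hc.isTraceDual_mul hU.mem hU.isTraceDual hW.mem hW.isTraceDual).card_eq_sq
    (span_range_mul_eq_top hprod hU.subset_span hW.subset_span)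

theorem card_mul_trace_mul_sum_mul_conjTranspose
    (hc : Complementary (𝒜₁ : Set (Matrix ι ι ℂ)) (𝒜₂ : Set (Matrix ι ι ℂ)))
    (hprod : Submodule.span ℂ {X : Matrix ι ι ℂ | ∃ A ∈ 𝒜₁, ∃ B ∈ 𝒜₂, X = A * B} = ⊤)
    (hU : IsHSOrthonormalBasis (𝒜₁ : Set (Matrix ι ι ℂ)) U)
    (hW : IsHSOrthonormalBasis (𝒜₂ : Set (Matrix ι ι ℂ)) W) {A : Matrix ι ι ℂ} (hA : A ∈ 𝒜₁) :
    Fintype.card κ₂ * (A * ∑ i, U i * (U i)ᴴ).trace = Fintype.card ι * A.trace := by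
  have hn : (Fintype.card ι : ℂ) ≠ 0 := Nat.cast_ne_zero.2 Fintype.card_ne_zero
  have hterm : ∀ i j, (((Fintype.card ι : ℂ) • (U i * W j)ᴴ) * A * (U i * W j)).trace
      = (A * (U i * (U i)ᴴ)).trace := by
    intro i j
    have hcycle : ((U i * W j)ᴴ * A * (U i * W j)).trace
        = ((U i)ᴴ * A * U i * (W j * (W j)ᴴ)).trace := by
      simp only [conjTranspose_mul, Matrix.mul_assoc]
      rw [trace_mul_comm]
      simp only [Matrix.mul_assoc]
    have hWW : (W j * (W j)ᴴ).trace = 1 := by rw [trace_mul_comm, hW.isTraceDual, if_pos rfl]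
    rw [Matrix.smul_mul, Matrix.smul_mul, trace_smul, hcycle,
      hc.trace_mul (A := (U i)ᴴ * A * U i) (B := W j * (W j)ᴴ)
        (mul_mem (mul_mem (star_mem (hU.mem i)) hA) (hU.mem i))
        (mul_mem (hW.mem j) (star_mem (hW.mem j))),
      hWW, Matrix.mul_assoc, trace_mul_comm, Matrix.mul_assoc, smul_eq_mul]
    field_simp
  rw [← (hc.isTraceDual_mul hU.mem hU.isTraceDual hW.mem hW.isTraceDual).sum_trace_mul_mul
    (span_range_mul_eq_top hprod hU.subset_span hW.subset_span) A, Fintype.sum_prod_type]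
  simp only [hterm, Finset.sum_const, Finset.card_univ, nsmul_eq_mul, Matrix.mul_sum, trace_sum]
  rw [Finset.mul_sum]

theorem sum_mul_conjTranspose_eq
    (hc : Complementary (𝒜₁ : Set (Matrix ι ι ℂ)) (𝒜₂ : Set (Matrix ι ι ℂ)))
    (hprod : Submodule.span ℂ {X : Matrix ι ι ℂ | ∃ A ∈ 𝒜₁, ∃ B ∈ 𝒜₂, X = A * B} = ⊤)
    (hU : IsHSOrthonormalBasis (𝒜₁ : Set (Matrix ι ι ℂ)) U)
    (hW : IsHSOrthonormalBasis (𝒜₂ : Set (Matrix ι ι ℂ)) W) :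
    ∑ i, U i * (U i)ᴴ = ((Fintype.card κ₁ : ℂ) / Fintype.card ι) • 1 := by
  have hn : (Fintype.card ι : ℂ) ≠ 0 := Nat.cast_ne_zero.2 Fintype.card_ne_zero
  have hcard : (Fintype.card κ₁ * Fintype.card κ₂ : ℂ) = Fintype.card ι ^ 2 := by
    exact_mod_cast hc.card_mul_card hprod hU hW
  have hκ₂ : (Fintype.card κ₂ : ℂ) ≠ 0 := by
    rintro h
    rw [h, mul_zero] at hcard
    exact pow_ne_zero 2 hn hcard.symm
  refine eq_smul_one_of_forall_trace_mul_eq (T := ∑ i, U i * (U i)ᴴ)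
    (sum_mem fun i _ ↦ mul_mem (hU.mem i) (star_mem (hU.mem i))) fun A hA ↦ ?_
  have h := hc.card_mul_trace_mul_sum_mul_conjTranspose hprod hU hW hA
  rw [div_mul_eq_mul_div, eq_div_iff hn]
  refine mul_left_cancel₀ hκ₂ ?_
  linear_combination (Fintype.card ι : ℂ) * h - A.trace * hcard

end Complementary

end OrthonormalBasis

/-- If 𝒜₁, 𝒜₂ are complementary subalgebras of M_n(ℂ) whose products span M_n and
{U_i} is an orthonormal basis of 𝒜₁ (of cardinality m₁ = dim 𝒜₁), then
E(X) = (n / m₁) ∑_i U_i* X U_i is the trace-preserving conditional expectation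
onto 𝒜₁′, and (dim 𝒜₁)(dim 𝒜₂) = n². -/
theorem condExp_onto_commutant_of_products_span (n : ℕ)
    (𝒜₁ 𝒜₂ : StarSubalgebra ℂ (Matrix (Fin n) (Fin n) ℂ))
    (hc : Complementary (𝒜₁ : Set (Matrix (Fin n) (Fin n) ℂ)) (𝒜₂ : Set (Matrix (Fin n) (Fin n) ℂ)))
    (hspanM : Submodule.span ℂ
      {X : Matrix (Fin n) (Fin n) ℂ | ∃ A ∈ 𝒜₁, ∃ B ∈ 𝒜₂, X = A * B} = ⊤)
    (m₁ m₂ : ℕ)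
    (U : Fin m₁ → Matrix (Fin n) (Fin n) ℂ)
    (hUmem : ∀ i, U i ∈ 𝒜₁)
    (hUorth : ∀ i j, ((U i)ᴴ * U j).trace = if i = j then (1 : ℂ) else 0)
    (hUspan : Submodule.span ℂ (Set.range U)
      = Submodule.span ℂ (𝒜₁ : Set (Matrix (Fin n) (Fin n) ℂ)))
    (W : Fin m₂ → Matrix (Fin n) (Fin n) ℂ)
    (hWmem : ∀ i, W i ∈ 𝒜₂)
    (hWorth : ∀ i j, ((W i)ᴴ * W j).trace = if i = j then (1 : ℂ) else 0)
    (hWspan : Submodule.span ℂ (Set.range W)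
      = Submodule.span ℂ (𝒜₂ : Set (Matrix (Fin n) (Fin n) ℂ)))
    (E : Matrix (Fin n) (Fin n) ℂ → Matrix (Fin n) (Fin n) ℂ)
    (hE : ∀ X, E X = ((n : ℂ) / (m₁ : ℂ)) • ∑ i, (U i)ᴴ * X * U i) :
    (IsCondExp (matCommutant (𝒜₁ : Set (Matrix (Fin n) (Fin n) ℂ))) E
        ∧ ∀ X, (E X).trace = X.trace)
      ∧ m₁ * m₂ = n ^ 2 := by
  rcases Nat.eq_zero_or_pos n with rfl | hn
  · obtain rfl : m₁ = 0 := by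
      by_contra h
      simpa using hUorth ⟨0, Nat.pos_of_ne_zero h⟩ ⟨0, Nat.pos_of_ne_zero h⟩
    exact ⟨⟨⟨fun _ _ _ ↦ Subsingleton.elim _ _, fun _ _ _ ↦ by simp⟩, by simp⟩, by simp⟩
  have : Nonempty (Fin n) := ⟨⟨0, hn⟩⟩
  have hU : IsHSOrthonormalBasis (𝒜₁ : Set _) U :=
    ⟨hUmem, hUorth, hUspan ▸ Submodule.subset_span⟩
  have hW : IsHSOrthonormalBasis (𝒜₂ : Set _) W :=
    ⟨hWmem, hWorth, hWspan ▸ Submodule.subset_span⟩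
  have hcard : m₁ * m₂ = n ^ 2 := by simpa using hc.card_mul_card hspanM hU hW
  have hT : ∑ i, U i * (U i)ᴴ = ((m₁ : ℂ) / n) • 1 := by
    simpa using hc.sum_mul_conjTranspose_eq hspanM hU hW
  have hm₁ : (m₁ : ℂ) / n ≠ 0 := by
    refine div_ne_zero (Nat.cast_ne_zero.2 fun h ↦ ?_) (Nat.cast_ne_zero.2 hn.ne')
    rw [h, zero_mul] at hcard
    exact (pow_pos hn 2).ne hcard
  obtain rfl : E = fun X ↦ ((m₁ : ℂ) / n)⁻¹ • ∑ i, (U i)ᴴ * X * U i :=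
    funext fun X ↦ by rw [hE, inv_div]
  exact ⟨hU.isCondExp_matCommutant hm₁ hT, hcard⟩
end

section
/- Two subalgebras 𝒜_1, 𝒜_2 of M_n(ℂ) are complementary if and only if the composition E_1 ∘ E_2 of the trace-preserving conditional expectations E_i : M_n → 𝒜_i equals the map X ↦ (Tr X / n)·I. -/
/-!
`E X` is the unique element of `𝒜` whose Hilbert–Schmidt pairings with `𝒜` agree with those of
`X`. Complementarity says that every `Y ∈ 𝒜₂` pairs with `𝒜₁` like `(Tr Y / n) • 1 ∈ 𝒜₁`. Since
`E₂` fixes `𝒜₂` and preserves the trace (because `1 ∈ 𝒜₂`), this is equivalent to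
`E₁ (E₂ X) = (Tr X / n) • 1` for all `X`.
-/

open Matrix BigOperators

namespace IsCondExp

variable {ι S : Type*} [Fintype ι] [DecidableEq ι] [SetLike S (Matrix ι ι ℂ)]
  {𝒜 : S} {E : Matrix ι ι ℂ → Matrix ι ι ℂ}

theorem trace_conjTranspose_mul_apply (h : IsCondExp (𝒜 : Set (Matrix ι ι ℂ)) E)
    {A : Matrix ι ι ℂ} (hA : A ∈ 𝒜) (X : Matrix ι ι ℂ) :
    (Aᴴ * E X).trace = (Aᴴ * X).trace := by
  have horth := h.2 X A hA
  rw [Matrix.mul_sub, trace_sub, sub_eq_zero] at horth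
  exact horth.symm

open scoped ComplexOrder in
theorem apply_eq_of_trace_conjTranspose_mul_eq [AddSubgroupClass S (Matrix ι ι ℂ)]
    (h : IsCondExp (𝒜 : Set (Matrix ι ι ℂ)) E) {X Z : Matrix ι ι ℂ} (hZ : Z ∈ 𝒜)
    (hXZ : ∀ A ∈ 𝒜, (Aᴴ * X).trace = (Aᴴ * Z).trace) : E X = Z := by
  set D := E X - Z
  have hD : D ∈ 𝒜 := sub_mem (h.1 X) hZ
  have hDD : (Dᴴ * D).trace = 0 := by
    rw [Matrix.mul_sub, trace_sub, h.trace_conjTranspose_mul_apply hD, hXZ D hD, sub_self]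
  exact sub_eq_zero.mp (trace_conjTranspose_mul_self_eq_zero_iff.mp hDD)

theorem apply_eq_self [AddSubgroupClass S (Matrix ι ι ℂ)]
    (h : IsCondExp (𝒜 : Set (Matrix ι ι ℂ)) E) {B : Matrix ι ι ℂ} (hB : B ∈ 𝒜) : E B = B :=
  h.apply_eq_of_trace_conjTranspose_mul_eq hB fun _ _ => rfl

theorem trace_apply [OneMemClass S (Matrix ι ι ℂ)]
    (h : IsCondExp (𝒜 : Set (Matrix ι ι ℂ)) E) (X : Matrix ι ι ℂ) : (E X).trace = X.trace := by
  simpa using h.trace_conjTranspose_mul_apply (one_mem 𝒜) X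

end IsCondExp

theorem complementary_iff_condExp_comp_eq_trace_general (n : ℕ)
    (𝒜₁ 𝒜₂ : StarSubalgebra ℂ (Matrix (Fin n) (Fin n) ℂ))
    (E₁ E₂ : Matrix (Fin n) (Fin n) ℂ → Matrix (Fin n) (Fin n) ℂ)
    (h1 : IsCondExp (𝒜₁ : Set (Matrix (Fin n) (Fin n) ℂ)) E₁)
    (h2 : IsCondExp (𝒜₂ : Set (Matrix (Fin n) (Fin n) ℂ)) E₂) :
    Complementary (𝒜₁ : Set (Matrix (Fin n) (Fin n) ℂ)) (𝒜₂ : Set (Matrix (Fin n) (Fin n) ℂ)) ↔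
      ∀ X, E₁ (E₂ X) = (X.trace / (n : ℂ)) • (1 : Matrix (Fin n) (Fin n) ℂ) := by
  have trace_mul_scalar : ∀ (A : Matrix (Fin n) (Fin n) ℂ) (c : ℂ),
      (Aᴴ * (c • (1 : Matrix (Fin n) (Fin n) ℂ))).trace = Aᴴ.trace * c := by
    intro A c
    rw [Matrix.mul_smul, Matrix.mul_one, trace_smul, smul_eq_mul, mul_comm]
  constructor
  · intro hc X
    refine h1.apply_eq_of_trace_conjTranspose_mul_eq (SMulMemClass.smul_mem _ (one_mem 𝒜₁))
      fun A hA => ?_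
    rw [hc A hA _ (h2.1 X), h2.trace_apply, trace_mul_scalar, Fintype.card_fin, mul_div_assoc]
  · intro hE A hA B hB
    rw [← h1.trace_conjTranspose_mul_apply hA, ← h2.apply_eq_self hB, hE, trace_mul_scalar,
      h2.apply_eq_self hB, Fintype.card_fin, mul_div_assoc]

/-- Two subalgebras 𝒜₁, 𝒜₂ of M_n(ℂ) are complementary iff the composition
E₁ ∘ E₂ of their trace-preserving conditional expectations is X ↦ (Tr X / n)·I. -/
theorem complementary_iff_condExp_comp_eq_trace (n : ℕ)
    (𝒜₁ 𝒜₂ : StarSubalgebra ℂ (Matrix (Fin n) (Fin n) ℂ))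
    (E₁ E₂ : Matrix (Fin n) (Fin n) ℂ → Matrix (Fin n) (Fin n) ℂ)
    (h1 : IsCondExp (𝒜₁ : Set (Matrix (Fin n) (Fin n) ℂ)) E₁)
    (h2 : IsCondExp (𝒜₂ : Set (Matrix (Fin n) (Fin n) ℂ)) E₂)
    (ht1 : ∀ X, (E₁ X).trace = X.trace)
    (ht2 : ∀ X, (E₂ X).trace = X.trace) :
    Complementary (𝒜₁ : Set (Matrix (Fin n) (Fin n) ℂ)) (𝒜₂ : Set (Matrix (Fin n) (Fin n) ℂ)) ↔
      ∀ X, E₁ (E₂ X) = (X.trace / (n : ℂ)) • (1 : Matrix (Fin n) (Fin n) ℂ) :=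
  complementary_iff_condExp_comp_eq_trace_general n 𝒜₁ 𝒜₂ E₁ E₂ h1 h2
end
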